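/- arXiv:2107.10612 — 7 statements merged into one kernel-verified Lean document; each statement's English description precedes it below -/
import Mathlib

section
/- In any directed acyclic graph G(θ'), all influential nodes lie on a single directed path in increasing order of progeny: for any two influential nodes s and t with p_s(θ') ≻ p_t(θ'), agent t belongs to P_s(θ'), i.e., there is a directed path from t to s in G(θ'). (Observation 1.) -/
/-- Agent `j` can reach agent `i` in the graph given by report profile `θ`
(an edge `(a,b)` exists when `b ∈ θ a`, i.e. agent `a` follows agent `b`). -/
def Reaches {n : ℕ} (θ : Fin n → Finset (Fin n)) (j i : Fin n) : Prop :=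
  Relation.ReflTransGen (fun a b => b ∈ θ a) j i

/-- The graph of the report profile `θ` is a DAG: no nontrivial directed cycles. -/
def IsDag {n : ℕ} (θ : Fin n → Finset (Fin n)) : Prop :=
  ∀ i j : Fin n, Reaches θ i j → Reaches θ j i → i = j

/-- The progeny `P_i(θ)` of agent `i`: all agents having a directed path to `i`
(including `i`). -/
def progenySet {n : ℕ} (θ : Fin n → Finset (Fin n)) (i : Fin n) : Set (Fin n) :=
  {j | Reaches θ j i}

/-- `p_i(θ) = |P_i(θ)|`. -/
noncomputable def progeny {n : ℕ} (θ : Fin n → Finset (Fin n)) (i : Fin n) : ℕ :=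
  Nat.card (progenySet θ i)

/-- `p_i ≻ p_j`: either `p_i > p_j`, or `p_i = p_j` and `i < j` (lexicographic
tie-breaking). -/
def Prec {n : ℕ} (θ : Fin n → Finset (Fin n)) (i j : Fin n) : Prop :=
  progeny θ j < progeny θ i ∨ (progeny θ i = progeny θ j ∧ i < j)

/-- Agent `i` is an influential node in `G(θ)`: after deleting all of `i`'s
out-edges, `p_i ≻ p_j` for every `j ≠ i`. -/
def Influential {n : ℕ} (θ : Fin n → Finset (Fin n)) (i : Fin n) : Prop :=
  ∀ j : Fin n, j ≠ i → Prec (Function.update θ i ∅) i j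

/-- The influential set: all influential nodes of `G(θ)`. -/
def influentialSet {n : ℕ} (θ : Fin n → Finset (Fin n)) : Set (Fin n) :=
  {i | Influential θ i}

/-- Deleting edges can only destroy reachability. -/
lemma reaches_of_update {n : ℕ} (θ : Fin n → Finset (Fin n)) (i j k : Fin n)
    (h : Reaches (Function.update θ i ∅) j k) : Reaches θ j k := by
  refine Relation.ReflTransGen.mono (fun a b hab => ?_) _ _ h
  by_cases hai : a = i
  · subst hai; simp [Function.update_self] at hab
  · rwa [Function.update_of_ne hai] at hab

/-- A walk to `i` can avoid `i`'s out-edges (truncate at first visit). -/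
lemma reaches_update_self {n : ℕ} (θ : Fin n → Finset (Fin n)) (i j : Fin n)
    (h : Reaches θ j i) : Reaches (Function.update θ i ∅) j i := by
  induction h using Relation.ReflTransGen.head_induction_on with
  | refl => exact Relation.ReflTransGen.refl
  | head hab _ ih =>
    rename_i a b _
    by_cases hai : a = i
    · exact hai ▸ Relation.ReflTransGen.refl
    · exact Relation.ReflTransGen.head (by rwa [Function.update_of_ne hai]) ih

/-- If `t` does not reach `s`, then walks to `s` avoid `t`'s out-edges. -/
lemma reaches_update_of_not_reaches {n : ℕ} (θ : Fin n → Finset (Fin n)) (t s j : Fin n)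
    (hts : ¬ Reaches θ t s) (h : Reaches θ j s) :
    Reaches (Function.update θ t ∅) j s := by
  induction h using Relation.ReflTransGen.head_induction_on with
  | refl => exact Relation.ReflTransGen.refl
  | head hab hbs ih =>
    rename_i a b
    by_cases hat : a = t
    · exact absurd (hat ▸ Relation.ReflTransGen.head hab hbs) hts
    · exact Relation.ReflTransGen.head (by rwa [Function.update_of_ne hat]) ih

lemma progeny_update_self {n : ℕ} (θ : Fin n → Finset (Fin n)) (i : Fin n) :
    progeny (Function.update θ i ∅) i = progeny θ i := by
  unfold progeny
  have : progenySet (Function.update θ i ∅) i = progenySet θ i :=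
    Set.ext fun j => ⟨reaches_of_update θ i j i, reaches_update_self θ i j⟩
  rw [this]

lemma progeny_update_of_not_reaches {n : ℕ} (θ : Fin n → Finset (Fin n)) (t s : Fin n)
    (hts : ¬ Reaches θ t s) :
    progeny (Function.update θ t ∅) s = progeny θ s := by
  unfold progeny
  have : progenySet (Function.update θ t ∅) s = progenySet θ s :=
    Set.ext fun j => ⟨reaches_of_update θ t j s, reaches_update_of_not_reaches θ t s j hts⟩
  rw [this]

/-- **Observation 1.** In any DAG `G(θ')`, all influential nodes lie on a single
directed path in increasing order of progeny: if `s` and `t` are influential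
nodes with `p_s ≻ p_t`, then `t ∈ P_s(θ')`. -/
theorem influential_nodes_on_one_path {n : ℕ} (θ' : Fin n → Finset (Fin n))
    (hdag : IsDag θ') (s t : Fin n) (hs : Influential θ' s) (ht : Influential θ' t)
    (hst : Prec θ' s t) :
    t ∈ progenySet θ' s := by
  by_contra hts
  have hne : s ≠ t := by
    rintro rfl
    rcases hst with h | ⟨_, h⟩
    · exact lt_irrefl _ h
    · exact lt_irrefl _ h
  have hprec := ht s hne
  have h1 : progeny (Function.update θ' t ∅) t = progeny θ' t :=
    progeny_update_self θ' t
  have h2 : progeny (Function.update θ' t ∅) s = progeny θ' s :=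
    progeny_update_of_not_reaches θ' t s hts
  rcases hprec with h | ⟨h, hlt⟩
  · rw [h1, h2] at h
    rcases hst with h' | ⟨h', _⟩
    · omega
    · omega
  · rw [h1, h2] at h
    rcases hst with h' | ⟨_, hlt'⟩
    · omega
    · exact absurd hlt (not_lt.mpr hlt'.le)
end

section
/- In every directed acyclic graph G(θ') on n ≥ 1 agents, the agent i* whose progeny is ≻-maximal (i.e., p_{i*}(θ') ≻ p_j(θ') for all j ≠ i*) is an influential node; in particular, the influential set S^inf(G(θ')) is nonempty. -/
/-- In every DAG on `n ≥ 1` agents, the agent `i*` whose progeny is ≻-maximal is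
an influential node; in particular the influential set is nonempty. -/
theorem max_agent_influential {n : ℕ} (hn : 1 ≤ n) (θ' : Fin n → Finset (Fin n))
    (hdag : IsDag θ') (istar : Fin n)
    (hmax : ∀ j : Fin n, j ≠ istar → Prec θ' istar j) :
    Influential θ' istar ∧ (influentialSet θ').Nonempty := by
  set θ := Function.update θ' istar ∅ with hθdef
  have hedge : ∀ a b : Fin n, b ∈ θ a → b ∈ θ' a := by
    intro a b hb
    by_cases h : a = istar
    · subst h; simp [hθdef, Function.update_self] at hb
    · simpa [hθdef, Function.update_of_ne h] using hb
  have hsub : ∀ a b : Fin n, Reaches θ a b → Reaches θ' a b := by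
    intro a b h
    exact Relation.ReflTransGen.mono (fun x y => hedge x y) _ _ h
  have hstar : ∀ j : Fin n, Reaches θ' j istar → Reaches θ j istar := by
    intro j h
    induction h using Relation.ReflTransGen.head_induction_on with
    | refl => exact Relation.ReflTransGen.refl
    | head hab htail ih =>
      rename_i a b
      by_cases ha : a = istar
      · have hb : istar = b := hdag istar b
          (Relation.ReflTransGen.single (ha ▸ hab)) htail
        have hab2 : a = b := ha.trans hb
        exact hab2 ▸ ih
      · exact Relation.ReflTransGen.head
          (show b ∈ θ a by simp [hθdef, Function.update_of_ne ha]; exact hab) ih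
  have hseq : progenySet θ istar = progenySet θ' istar :=
    Set.ext fun j => ⟨fun h => hsub j istar h, fun h => hstar j h⟩
  have hpeq : progeny θ istar = progeny θ' istar := by
    unfold progeny; rw [hseq]
  have hle : ∀ j : Fin n, progeny θ j ≤ progeny θ' j := by
    intro j
    have hss : progenySet θ j ⊆ progenySet θ' j := fun a ha => hsub a j ha
    unfold progeny
    rw [Nat.card_coe_set_eq, Nat.card_coe_set_eq]
    exact Set.ncard_le_ncard hss (Set.toFinite _)
  have hinf : Influential θ' istar := by
    intro j hj
    rcases hmax j hj with hlt | ⟨heq, hij⟩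
    · left
      calc progeny θ j ≤ progeny θ' j := hle j
        _ < progeny θ' istar := hlt
        _ = progeny θ istar := hpeq.symm
    · have h1 : progeny θ j ≤ progeny θ istar := by
        rw [hpeq, heq]; exact hle j
      rcases lt_or_eq_of_le h1 with h2 | h2
      · exact Or.inl h2
      · exact Or.inr ⟨h2.symm, hij⟩
  exact ⟨hinf, ⟨istar, hinf⟩⟩
end

section
/- Every influential node has at least half of the maximum progeny: in any directed acyclic graph G(θ'), if agent i is an influential node, then 2·p_i(θ') ≥ p*(θ'), where p*(θ') = max_{j∈N} p_j(θ') is the maximum progeny in the graph. -/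
lemma aux_reaches_mono {n : ℕ} (θ : Fin n → Finset (Fin n)) (i j k : Fin n)
    (h : Reaches (Function.update θ i ∅) k j) : Reaches θ k j := by
  refine Relation.ReflTransGen.mono ?_ _ _ h
  intro a b hab
  by_cases ha : a = i
  · subst ha; simp [Function.update_self] at hab
  · simpa [Function.update_of_ne ha] using hab

lemma aux_reaches_update_self {n : ℕ} (θ : Fin n → Finset (Fin n)) (i k : Fin n)
    (h : Reaches θ k i) : Reaches (Function.update θ i ∅) k i := by
  induction h using Relation.ReflTransGen.head_induction_on with
  | refl => exact Relation.ReflTransGen.refl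
  | head hab _ ih =>
    rename_i a b _
    by_cases ha : a = i
    · subst ha; exact Relation.ReflTransGen.refl
    · exact Relation.ReflTransGen.head (by simpa [Function.update_of_ne ha] using hab) ih

lemma aux_reaches_split {n : ℕ} (θ : Fin n → Finset (Fin n)) (i j k : Fin n)
    (h : Reaches θ k j) :
    Reaches (Function.update θ i ∅) k j ∨ Reaches θ k i := by
  induction h using Relation.ReflTransGen.head_induction_on with
  | refl => exact Or.inl Relation.ReflTransGen.refl
  | head hab _ ih =>
    rename_i a b _
    by_cases ha : a = i
    · subst ha; exact Or.inr Relation.ReflTransGen.refl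
    · rcases ih with ih | ih
      · exact Or.inl (Relation.ReflTransGen.head (by simpa [Function.update_of_ne ha] using hab) ih)
      · exact Or.inr (Relation.ReflTransGen.head hab ih)

/-- Every influential node has at least half of the maximum progeny: in any DAG
`G(θ')`, if `i` is influential then `2 · p_i(θ') ≥ p*(θ')`, where
`p*(θ') = max_{j ∈ N} p_j(θ')`. -/
theorem influential_half_max_progeny {n : ℕ} (θ' : Fin n → Finset (Fin n))
    (hdag : IsDag θ') (i : Fin n) (hi : Influential θ' i) :
    Finset.univ.sup (progeny θ') ≤ 2 * progeny θ' i := by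
  rw [Finset.sup_le_iff]
  intro j _
  have hpi : progeny θ' i = progeny (Function.update θ' i ∅) i := by
    unfold progeny
    have : progenySet θ' i = progenySet (Function.update θ' i ∅) i := by
      ext k
      constructor
      · exact fun h => aux_reaches_update_self θ' i k h
      · exact fun h => aux_reaches_mono θ' i i k h
    rw [this]
  by_cases hj : j = i
  · subst hj; omega
  · have h2 : progeny (Function.update θ' i ∅) j ≤ progeny (Function.update θ' i ∅) i := by
      rcases hi j hj with h | ⟨h, _⟩ <;> omega
    have h1 : progeny θ' j ≤ progeny (Function.update θ' i ∅) j + progeny θ' i := by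
      unfold progeny
      rw [Nat.card_coe_set_eq, Nat.card_coe_set_eq, Nat.card_coe_set_eq]
      calc (progenySet θ' j).ncard
          ≤ (progenySet (Function.update θ' i ∅) j ∪ progenySet θ' i).ncard := by
            apply Set.ncard_le_ncard
            · intro k hk
              rcases aux_reaches_split θ' i j k hk with h | h
              · exact Or.inl h
              · exact Or.inr h
            · exact Set.toFinite _
        _ ≤ _ := Set.ncard_union_le _ _
    omega
end

section
/- Misreporting can only enlarge the set of influential nodes ranked below a given influential node: let i be an influential node in G((θ'_{-i},θ_i)) and for a profile θ'' define S_i(θ'') = {j ∈ S^inf(G(θ'')) : p_i(θ'') ≻ p_j(θ'')}. Then for every misreport θ'_i ⊆ θ_i, every j ∈ S_i((θ'_{-i},θ_i)) is still an influential node with p_i ≻ p_j under (θ'_{-i},θ'_i); that is, S_i((θ'_{-i},θ_i)) ⊆ S_i((θ'_{-i},θ'_i)). -/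
/-- `S_i(θ'')`: the set of influential nodes ranked strictly below agent `i`
(those influential `j` with `p_i(θ'') ≻ p_j(θ'')`). -/
def Sbelow {n : ℕ} (θ'' : Fin n → Finset (Fin n)) (i : Fin n) : Set (Fin n) :=
  {j | Influential θ'' j ∧ Prec θ'' i j}

lemma reaches_mono {n : ℕ} {ρ τ : Fin n → Finset (Fin n)} (h : ∀ a, ρ a ⊆ τ a)
    {j i : Fin n} (hr : Reaches ρ j i) : Reaches τ j i :=
  Relation.ReflTransGen.mono (fun a b hab => h a hab) _ _ hr

lemma reaches_of_not_reaches {n : ℕ} {ρ τ : Fin n → Finset (Fin n)} {m l : Fin n}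
    (hagree : ∀ a, a ≠ m → ρ a = τ a) (hm : ¬ Reaches τ m l) :
    ∀ {k}, Reaches τ k l → Reaches ρ k l := by
  intro k h
  induction h using Relation.ReflTransGen.head_induction_on with
  | refl => exact Relation.ReflTransGen.refl
  | head hab hbl ih =>
    rename_i a b
    by_cases ha : a = m
    · exact absurd (Relation.ReflTransGen.head hab hbl) (ha ▸ hm)
    · exact Relation.ReflTransGen.head (by rw [hagree a ha]; exact hab) ih

lemma reaches_self_target {n : ℕ} {ρ τ : Fin n → Finset (Fin n)} {i : Fin n}
    (hd : IsDag τ) (hagree : ∀ a, a ≠ i → ρ a = τ a) :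
    ∀ {k}, Reaches τ k i → Reaches ρ k i := by
  intro k h
  induction h using Relation.ReflTransGen.head_induction_on with
  | refl => exact Relation.ReflTransGen.refl
  | head hab hbl ih =>
    rename_i a b
    by_cases ha : a = i
    · subst ha
      have hb : a = b := hd a b (Relation.ReflTransGen.single hab) hbl
      exact hb ▸ ih
    · exact Relation.ReflTransGen.head (by rw [hagree a ha]; exact hab) ih

lemma progeny_mono {n : ℕ} {ρ τ : Fin n → Finset (Fin n)} (h : ∀ a, ρ a ⊆ τ a)
    (k : Fin n) : progeny ρ k ≤ progeny τ k := by
  have hsub : progenySet ρ k ⊆ progenySet τ k := fun x hx => reaches_mono h hx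
  simpa [progeny, Nat.card_coe_set_eq] using
    Set.ncard_le_ncard hsub (Set.toFinite _)

lemma prec_transfer {n : ℕ} {A B : Fin n → Finset (Fin n)} {j l : Fin n}
    (h1 : progeny A j ≤ progeny B j) (h2 : progeny B l ≤ progeny A l)
    (h : Prec A j l) : Prec B j l := by
  rcases h with h | ⟨he, hlt⟩
  · exact Or.inl (lt_of_le_of_lt h2 (lt_of_lt_of_le h h1))
  · have hle : progeny B l ≤ progeny B j := le_trans h2 (le_trans (le_of_eq he.symm) h1)
    rcases lt_or_eq_of_le hle with h' | h'
    · exact Or.inl h'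
    · exact Or.inr ⟨h'.symm, hlt⟩


/-- Misreporting can only enlarge the set of influential nodes ranked below a
given influential node: if `i` is influential under truthful report `θᵢ`, then
for every misreport `θᵢ' ⊆ θᵢ`, every `j ∈ S_i((θ'_{-i}, θᵢ))` is still an
influential node with `p_i ≻ p_j` under `(θ'_{-i}, θᵢ')`. -/
theorem Sbelow_subset_of_misreport {n : ℕ} (θ' : Fin n → Finset (Fin n)) (i : Fin n)
    (θi θi' : Finset (Fin n)) (hsub : θi' ⊆ θi)
    (hd : IsDag (Function.update θ' i θi)) (hd' : IsDag (Function.update θ' i θi'))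
    (hi : Influential (Function.update θ' i θi) i) :
    Sbelow (Function.update θ' i θi) i ⊆ Sbelow (Function.update θ' i θi') i := by
  set θ : Fin n → Finset (Fin n) := Function.update θ' i θi with hθdef
  set σ : Fin n → Finset (Fin n) := Function.update θ' i θi' with hσdef
  intro j hj
  obtain ⟨hjinf, hprec⟩ := hj
  have hji : j ≠ i := by
    rintro rfl
    rcases hprec with h | ⟨_, h⟩
    · exact lt_irrefl _ h
    · exact lt_irrefl _ h
  have hσθ : ∀ a, σ a ⊆ θ a := by
    intro a
    by_cases ha : a = i
    · subst ha; simp [hθdef, hσdef, hsub]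
    · simp [hθdef, hσdef, Function.update_of_ne ha]
  have hσθagree : ∀ a, a ≠ i → σ a = θ a := by
    intro a ha
    simp [hθdef, hσdef, Function.update_of_ne ha]
  -- progeny of i is unchanged by the misreport
  have hPi : progenySet σ i = progenySet θ i := by
    apply Set.Subset.antisymm
    · exact fun x hx => reaches_mono hσθ hx
    · exact fun x hx => reaches_self_target hd hσθagree hx
  have hpi : progeny σ i = progeny θ i := by
    simp [progeny, hPi]
  -- set A := θ with j's edges removed, B := σ with j's edges removed
  set A : Fin n → Finset (Fin n) := Function.update θ j ∅ with hAdef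
  set B : Fin n → Finset (Fin n) := Function.update σ j ∅ with hBdef
  have hBA : ∀ a, B a ⊆ A a := by
    intro a
    by_cases ha : a = j
    · subst ha; simp [hAdef, hBdef]
    · simpa [hAdef, hBdef, Function.update_of_ne ha] using hσθ a
  have hBAagree : ∀ a, a ≠ i → B a = A a := by
    intro a ha
    by_cases haj : a = j
    · subst haj; simp [hAdef, hBdef]
    · simp [hAdef, hBdef, Function.update_of_ne haj, hσθagree a ha]
  have hAθ : ∀ a, A a ⊆ θ a := by
    intro a
    by_cases ha : a = j
    · subst ha; simp [hAdef]
    · simp [hAdef, Function.update_of_ne ha]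
  have hAθagree : ∀ a, a ≠ j → A a = θ a := fun a ha => Function.update_of_ne ha _ _
  -- key step: i cannot reach j in A
  have hnij : ¬ Reaches A i j := by
    intro hij
    have nji : ¬ Reaches θ j i := by
      intro h
      exact hji (hd j i h (reaches_mono hAθ hij))
    have hPiA : progenySet A i = progenySet θ i := by
      apply Set.Subset.antisymm
      · exact fun x hx => reaches_mono hAθ hx
      · exact fun x hx => reaches_of_not_reaches hAθagree nji hx
    have hsubset : progenySet θ i ⊆ progenySet θ j := by
      intro k hk
      have hkA : k ∈ progenySet A i := by rw [hPiA]; exact hk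
      exact reaches_mono hAθ (Relation.ReflTransGen.trans hkA hij)
    have hle : progeny θ i ≤ progeny θ j := by
      simpa [progeny, Nat.card_coe_set_eq] using
        Set.ncard_le_ncard hsubset (Set.toFinite _)
    have hge : progeny θ j ≤ progeny θ i := by
      rcases hprec with h | ⟨he, _⟩
      · exact le_of_lt h
      · exact le_of_eq he.symm
    have heq : progenySet θ i = progenySet θ j := by
      apply Set.eq_of_subset_of_ncard_le hsubset _ (Set.toFinite _)
      rw [← Nat.card_coe_set_eq, ← Nat.card_coe_set_eq]
      exact hge
    have : Reaches θ j i := by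
      have : j ∈ progenySet θ j := Relation.ReflTransGen.refl
      rw [← heq] at this
      exact this
    exact nji this
  -- progeny of j after deleting its own edges is unchanged by the misreport
  have hPjB : progenySet B j = progenySet A j := by
    apply Set.Subset.antisymm
    · exact fun x hx => reaches_mono hBA hx
    · exact fun x hx => reaches_of_not_reaches hBAagree hnij hx
  have hpj : progeny B j = progeny A j := by simp [progeny, hPjB]
  constructor
  · -- j is influential under σ
    intro l hl
    have hA : Prec A j l := hjinf l hl
    exact prec_transfer (le_of_eq hpj.symm) (progeny_mono hBA l) hA
  · -- Prec σ i j
    exact prec_transfer (le_of_eq hpi.symm) (progeny_mono hσθ j) hprec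
end

section
/- The Geometric Mechanism achieves approximation ratio 1/2 in the family of DAGs: for every DAG G on agents N with influential set S^inf(G) = {s_1,…,s_m} and maximum progeny p* = max_{i∈N} p_i, the expected progeny of the selected agent satisfies Σ_{j=1}^{m} (1/2^{m-j+1})·p_{s_j} ≥ p*/2. (Theorem 2.) -/
open Classical in
/-- The Geometric Mechanism: an influential node ranked `j`-th from the top among
the `m` influential nodes (equivalently, with `m - j` influential nodes ranked
below her) is selected with probability `1/2^(m-j+1)`; non-influential agents are
selected with probability `0`. -/
noncomputable def geoProb {n : ℕ} (θ : Fin n → Finset (Fin n)) (i : Fin n) : ℝ :=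
  if Influential θ i then
    (1 / 2 : ℝ) ^ (Nat.card {j : Fin n | Influential θ j ∧ Prec θ i j} + 1)
  else 0

section AuxGM
variable {n : ℕ}

lemma gm_reaches_mono {θ θ' : Fin n → Finset (Fin n)} (h : ∀ a, θ a ⊆ θ' a) {j i : Fin n}
    (hr : Reaches θ j i) : Reaches θ' j i :=
  Relation.ReflTransGen.mono (fun a b hb => h a hb) _ _ hr

lemma gm_update_subset (θ : Fin n → Finset (Fin n)) (s a : Fin n) :
    Function.update θ s ∅ a ⊆ θ a := by
  rcases eq_or_ne a s with rfl | h
  · simp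
  · simp [Function.update_of_ne h]

lemma gm_progeny_eq_ncard (θ : Fin n → Finset (Fin n)) (i : Fin n) :
    progeny θ i = (progenySet θ i).ncard :=
  Nat.card_coe_set_eq _

lemma gm_progeny_mono {θ θ' : Fin n → Finset (Fin n)} (h : ∀ a, θ a ⊆ θ' a) (i : Fin n) :
    progeny θ i ≤ progeny θ' i := by
  rw [gm_progeny_eq_ncard, gm_progeny_eq_ncard]
  exact Set.ncard_le_ncard (fun j hj => gm_reaches_mono h hj) (Set.toFinite _)

lemma gm_progeny_le_n (θ : Fin n → Finset (Fin n)) (i : Fin n) : progeny θ i ≤ n := by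
  rw [gm_progeny_eq_ncard]
  calc (progenySet θ i).ncard ≤ (Set.univ : Set (Fin n)).ncard :=
        Set.ncard_le_ncard (Set.subset_univ _) Set.finite_univ
    _ = n := by simp [Set.ncard_univ]

lemma gm_progeny_update_self (θ : Fin n → Finset (Fin n)) (hdag : IsDag θ) (i : Fin n) :
    progeny (Function.update θ i ∅) i = progeny θ i := by
  refine le_antisymm (gm_progeny_mono (gm_update_subset θ i) i) ?_
  rw [gm_progeny_eq_ncard, gm_progeny_eq_ncard]
  refine Set.ncard_le_ncard ?_ (Set.toFinite _)
  intro j hj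
  simp only [progenySet, Set.mem_setOf_eq] at hj ⊢
  induction hj using Relation.ReflTransGen.head_induction_on with
  | refl => exact Relation.ReflTransGen.refl
  | @head a c h' h ih =>
    rcases eq_or_ne a i with rfl | ha
    · have hic : Reaches θ a c := Relation.ReflTransGen.single h'
      have : a = c := hdag a c hic h
      subst this
      exact Relation.ReflTransGen.refl
    · exact Relation.ReflTransGen.head
        (show c ∈ Function.update θ i ∅ a by simpa [Function.update_of_ne ha] using h') ih

lemma gm_reach_split (θ : Fin n → Finset (Fin n)) (s i : Fin n) {j : Fin n}
    (hr : Reaches θ j i) :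
    Reaches (Function.update θ s ∅) j i ∨ Reaches θ j s := by
  induction hr using Relation.ReflTransGen.head_induction_on with
  | refl => exact Or.inl Relation.ReflTransGen.refl
  | @head a c h' h ih =>
    rcases eq_or_ne a s with rfl | ha
    · exact Or.inr Relation.ReflTransGen.refl
    · rcases ih with h1 | h1
      · exact Or.inl (Relation.ReflTransGen.head
          (show c ∈ Function.update θ s ∅ a by simpa [Function.update_of_ne ha] using h') h1)
      · exact Or.inr (Relation.ReflTransGen.head h' h1)

lemma gm_prec_trichotomy (θ : Fin n → Finset (Fin n)) (i j : Fin n) :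
    Prec θ i j ∨ i = j ∨ Prec θ j i := by
  rcases lt_trichotomy (progeny θ j) (progeny θ i) with h | h | h
  · exact Or.inl (Or.inl h)
  · rcases lt_trichotomy i j with hij | hij | hij
    · exact Or.inl (Or.inr ⟨h.symm, hij⟩)
    · exact Or.inr (Or.inl hij)
    · exact Or.inr (Or.inr (Or.inr ⟨h, hij⟩))
  · exact Or.inr (Or.inr (Or.inl h))

lemma gm_prec_irrefl (θ : Fin n → Finset (Fin n)) (i : Fin n) : ¬ Prec θ i i := by
  simp [Prec]

lemma gm_prec_trans (θ : Fin n → Finset (Fin n)) {i j k : Fin n}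
    (h1 : Prec θ i j) (h2 : Prec θ j k) : Prec θ i k := by
  rcases h1 with h1 | ⟨h1e, h1l⟩ <;> rcases h2 with h2 | ⟨h2e, h2l⟩
  · exact Or.inl (h2.trans h1)
  · exact Or.inl (h2e ▸ h1)
  · exact Or.inl (h1e ▸ h2)
  · exact Or.inr ⟨h1e.trans h2e, h1l.trans h2l⟩

lemma gm_prec_key (θ : Fin n → Finset (Fin n)) {i j : Fin n} (h : Prec θ i j) :
    (n + 1) * (n - progeny θ i) + i.val < (n + 1) * (n - progeny θ j) + j.val := by
  have hi := gm_progeny_le_n θ i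
  have hj := gm_progeny_le_n θ j
  have hiv : i.val < n := i.isLt
  have hjv : j.val < n := j.isLt
  rcases h with h | ⟨he, hl⟩
  · have hstep : (n + 1) * (n - progeny θ i + 1) ≤ (n + 1) * (n - progeny θ j) :=
      Nat.mul_le_mul_left _ (by omega)
    have : (n + 1) * (n - progeny θ i + 1) = (n + 1) * (n - progeny θ i) + (n + 1) := by ring
    omega
  · have hl' : i.val < j.val := hl
    rw [he]
    omega

lemma gm_exists_top (θ : Fin n → Finset (Fin n)) (hn : 0 < n) :
    ∃ i : Fin n, ∀ j : Fin n, j ≠ i → Prec θ i j := by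
  obtain ⟨i, -, hi⟩ := Finset.exists_min_image Finset.univ
      (fun i : Fin n => (n + 1) * (n - progeny θ i) + i.val) ⟨⟨0, hn⟩, Finset.mem_univ _⟩
  refine ⟨i, fun j hj => ?_⟩
  rcases gm_prec_trichotomy θ i j with h | h | h
  · exact h
  · exact absurd h.symm hj
  · exact absurd (hi j (Finset.mem_univ j)) (gm_prec_key θ h).not_ge

end AuxGM

/-- **Theorem 2.** The Geometric Mechanism achieves approximation ratio `1/2` in
the family of DAGs: for every DAG `G(θ)`, the expected progeny of the selected
agent, `Σ_{j=1}^m (1/2^(m-j+1)) · p_{s_j}` (the sum of `x_i · p_i` over all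
agents), is at least `p*/2` where `p* = max_{i ∈ N} p_i`. -/
theorem geometric_mechanism_half_approx {n : ℕ} (θ : Fin n → Finset (Fin n))
    (hdag : IsDag θ) :
    ((Finset.univ.sup (progeny θ) : ℕ) : ℝ) / 2 ≤
      ∑ i : Fin n, geoProb θ i * (progeny θ i : ℝ) := by
  classical
  rcases Nat.eq_zero_or_pos n with rfl | hn
  · simp
  obtain ⟨istar, htop⟩ := gm_exists_top θ hn
  have hple : ∀ j, progeny θ j ≤ progeny θ istar := by
    intro j
    rcases eq_or_ne j istar with rfl | hj
    · exact le_refl _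
    · rcases htop j hj with h | ⟨he, _⟩
      · exact h.le
      · exact he.ge
  have hsup : Finset.univ.sup (progeny θ) = progeny θ istar :=
    le_antisymm (Finset.sup_le fun j _ => hple j) (Finset.le_sup (Finset.mem_univ _))
  have hinfl_star : Influential θ istar := by
    intro j hj
    have h1 : progeny (Function.update θ istar ∅) istar = progeny θ istar :=
      gm_progeny_update_self θ hdag istar
    have h2 : progeny (Function.update θ istar ∅) j ≤ progeny θ j :=
      gm_progeny_mono (gm_update_subset θ istar) j
    rcases htop j hj with h | ⟨he, hl⟩
    · exact Or.inl (by omega)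
    · have hle : progeny (Function.update θ istar ∅) j
          ≤ progeny (Function.update θ istar ∅) istar := by omega
      rcases hle.lt_or_eq with h3 | h3
      · exact Or.inl h3
      · exact Or.inr ⟨h3.symm, hl⟩
  have hkey : ∀ i, Influential θ i → progeny θ istar ≤ 2 * progeny θ i := by
    intro s hs
    rcases eq_or_ne s istar with rfl | hne
    · omega
    · have h1 : progeny (Function.update θ s ∅) s = progeny θ s :=
        gm_progeny_update_self θ hdag s
      have h2 : progeny (Function.update θ s ∅) istar
          ≤ progeny (Function.update θ s ∅) s := by
        rcases hs istar (Ne.symm hne) with h | ⟨he, _⟩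
        · exact h.le
        · exact he.ge
      have h3 : progeny θ istar
          ≤ progeny (Function.update θ s ∅) istar + progeny θ s := by
        rw [gm_progeny_eq_ncard, gm_progeny_eq_ncard, gm_progeny_eq_ncard]
        calc (progenySet θ istar).ncard
            ≤ (progenySet (Function.update θ s ∅) istar ∪ progenySet θ s).ncard := by
              refine Set.ncard_le_ncard ?_ (Set.toFinite _)
              intro j hj
              rcases gm_reach_split θ s istar hj with h | h
              · exact Or.inl h
              · exact Or.inr h
          _ ≤ _ := Set.ncard_union_le _ _
      omega
  set S : Finset (Fin n) := Finset.univ.filter (Influential θ) with hS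
  set m : ℕ := S.card with hm
  set r : Fin n → ℕ :=
    fun i => (Finset.univ.filter (fun j => Influential θ j ∧ Prec θ i j)).card with hr
  have hstar_mem : istar ∈ S := by simp [hS, hinfl_star]
  have hcard_eq : ∀ i : Fin n,
      Nat.card {j : Fin n | Influential θ j ∧ Prec θ i j} = r i := by
    intro i
    have hset : {j : Fin n | Influential θ j ∧ Prec θ i j}
        = ↑(Finset.univ.filter (fun j => Influential θ j ∧ Prec θ i j)) := by
      ext j; simp
    rw [hset, Nat.card_coe_set_eq, Set.ncard_coe_finset]
  have hgeo : ∀ i, Influential θ i → geoProb θ i = (1 / 2 : ℝ) ^ (r i + 1) := by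
    intro i hi
    rw [geoProb, if_pos hi, hcard_eq]
  have hsum_eq : ∑ i : Fin n, geoProb θ i * (progeny θ i : ℝ)
      = ∑ i ∈ S, (1 / 2 : ℝ) ^ (r i + 1) * (progeny θ i : ℝ) := by
    rw [hS, Finset.sum_filter]
    refine Finset.sum_congr rfl fun i _ => ?_
    by_cases hi : Influential θ i
    · rw [if_pos hi, hgeo i hi]
    · rw [if_neg hi, geoProb, if_neg hi, zero_mul]
  have hr_subset : ∀ i ∈ S,
      Finset.univ.filter (fun j => Influential θ j ∧ Prec θ i j) ⊆ S.erase i := by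
    intro i hi j hj
    simp only [Finset.mem_filter, Finset.mem_univ, true_and] at hj
    refine Finset.mem_erase.mpr ⟨?_, by simp [hS, hj.1]⟩
    rintro rfl
    exact gm_prec_irrefl θ j hj.2
  have hr_lt : ∀ i ∈ S, r i < m := by
    intro i hi
    have h1 := Finset.card_le_card (hr_subset i hi)
    have h2 : (S.erase i).card = m - 1 := by rw [Finset.card_erase_of_mem hi]
    have h3 : 1 ≤ m := Finset.card_pos.mpr ⟨i, hi⟩
    simp only [hr]
    omega
  have hr_star : r istar + 1 = m := by
    have hfe : Finset.univ.filter (fun j => Influential θ j ∧ Prec θ istar j)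
        = S.erase istar := by
      refine Finset.Subset.antisymm (hr_subset istar hstar_mem) ?_
      intro j hj
      rw [Finset.mem_erase] at hj
      simp only [Finset.mem_filter, Finset.mem_univ, true_and]
      exact ⟨by simpa [hS] using hj.2, htop j hj.1⟩
    have h3 : 1 ≤ m := Finset.card_pos.mpr ⟨istar, hstar_mem⟩
    have he2 : r istar = (S.erase istar).card := congrArg Finset.card hfe
    rw [he2, Finset.card_erase_of_mem hstar_mem]
    omega
  have hr_inj : ∀ i ∈ S, ∀ j ∈ S, r i = r j → i = j := by
    have key : ∀ a b : Fin n, Influential θ b → Prec θ a b → r b < r a := by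
      intro a b hb hab
      have hsub : Finset.univ.filter (fun j => Influential θ j ∧ Prec θ b j)
          ⊆ Finset.univ.filter (fun j => Influential θ j ∧ Prec θ a j) := by
        intro k hk
        simp only [Finset.mem_filter, Finset.mem_univ, true_and] at hk ⊢
        exact ⟨hk.1, gm_prec_trans θ hab hk.2⟩
      have hmem : b ∈ Finset.univ.filter (fun j => Influential θ j ∧ Prec θ a j) := by
        simp [hb, hab]
      have hnmem : b ∉ Finset.univ.filter (fun j => Influential θ j ∧ Prec θ b j) := by
        simp only [Finset.mem_filter, Finset.mem_univ, true_and, not_and]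
        exact fun _ => gm_prec_irrefl θ b
      exact Finset.card_lt_card ((Finset.ssubset_iff_of_subset hsub).mpr ⟨b, hmem, hnmem⟩)
    intro i hi j hj hrij
    by_contra hne
    have hiI : Influential θ i := by simpa [hS] using hi
    have hjI : Influential θ j := by simpa [hS] using hj
    rcases gm_prec_trichotomy θ i j with h | h | h
    · exact absurd hrij (by have := key i j hjI h; omega)
    · exact hne h
    · exact absurd hrij (by have := key j i hiI h; omega)
  have himg : S.image r = Finset.range m := by
    refine Finset.eq_of_subset_of_card_le ?_ ?_
    · intro k hk
      simp only [Finset.mem_image] at hk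
      obtain ⟨i, hi, rfl⟩ := hk
      exact Finset.mem_range.mpr (hr_lt i hi)
    · rw [Finset.card_range, Finset.card_image_of_injOn
        (fun i hi j hj h => hr_inj i hi j hj h)]
  have hgeom : ∀ M : ℕ, ∑ k ∈ Finset.range M, (1 / 2 : ℝ) ^ (k + 1)
      = 1 - (1 / 2 : ℝ) ^ M := by
    intro M
    induction M with
    | zero => simp
    | succ M ih => rw [Finset.sum_range_succ, ih]; ring
  have hwsum : ∑ i ∈ S, (1 / 2 : ℝ) ^ (r i + 1) = 1 - (1 / 2 : ℝ) ^ m := by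
    rw [← hgeom m, ← himg, Finset.sum_image hr_inj]
  have hhalf : ∀ i ∈ S, (progeny θ istar : ℝ) / 2 ≤ (progeny θ i : ℝ) := by
    intro i hi
    have h1 := hkey i (by simpa [hS] using hi)
    have h2 : (progeny θ istar : ℝ) ≤ 2 * (progeny θ i : ℝ) := by exact_mod_cast h1
    linarith
  have hsplit : ∑ i ∈ S, (1 / 2 : ℝ) ^ (r i + 1) * (progeny θ i : ℝ)
      = (∑ i ∈ S.erase istar, (1 / 2 : ℝ) ^ (r i + 1) * (progeny θ i : ℝ))
        + (1 / 2 : ℝ) ^ m * (progeny θ istar : ℝ) := by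
    rw [← Finset.sum_erase_add S _ hstar_mem, hr_star]
  have herase_sum : ∑ i ∈ S.erase istar, (1 / 2 : ℝ) ^ (r i + 1)
      = 1 - 2 * (1 / 2 : ℝ) ^ m := by
    have h : ∑ i ∈ S.erase istar, (1 / 2 : ℝ) ^ (r i + 1) + (1 / 2 : ℝ) ^ m
        = 1 - (1 / 2 : ℝ) ^ m := by
      rw [← hwsum, ← hr_star]
      exact Finset.sum_erase_add S _ hstar_mem
    linarith [h]
  have hlow : ∑ i ∈ S.erase istar, (1 / 2 : ℝ) ^ (r i + 1) * ((progeny θ istar : ℝ) / 2)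
      ≤ ∑ i ∈ S.erase istar, (1 / 2 : ℝ) ^ (r i + 1) * (progeny θ i : ℝ) := by
    refine Finset.sum_le_sum fun i hi => ?_
    exact mul_le_mul_of_nonneg_left (hhalf i (Finset.mem_of_mem_erase hi)) (by positivity)
  have hconst : ∑ i ∈ S.erase istar, (1 / 2 : ℝ) ^ (r i + 1) * ((progeny θ istar : ℝ) / 2)
      = (1 - 2 * (1 / 2 : ℝ) ^ m) * ((progeny θ istar : ℝ) / 2) := by
    rw [← Finset.sum_mul, herase_sum]
  rw [hsum_eq, hsup, hsplit]
  rw [hconst] at hlow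
  nlinarith [hlow]
end

section
/- Finite optimization bound underlying the upper bound: for every ε > 0 there exists K ∈ ℕ such that for all k ≥ K and all nonnegative reals β_0, β_1, …, β_{k-1} with Σ_{t=0}^{k-1} β_t ≤ 1, there exists j with k ≤ j ≤ 2k-1 such that Σ_{t=0}^{j-k} β_t·(k+t)/j ≤ 1/(1 + ln 2) + ε. -/
private lemma tele_Ico (f : ℕ → ℝ) {m n : ℕ} (h : m ≤ n) :
    ∑ i ∈ Finset.Ico m n, (f i - f (i + 1)) = f m - f n := by
  rw [Finset.sum_Ico_eq_sub _ h, Finset.sum_range_sub' f, Finset.sum_range_sub' f]; ring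

set_option maxHeartbeats 2000000 in
/-- Finite optimization bound underlying the `1/(1 + ln 2)` upper bound: for every
`ε > 0` there exists `K` such that for all `k ≥ K` and all nonnegative
`β₀, …, β_{k-1}` with `Σ_{t<k} β_t ≤ 1`, some cut point `j` with `k ≤ j ≤ 2k-1`
yields expected normalized progeny `Σ_{t=0}^{j-k} β_t (k+t)/j` at most
`1/(1 + ln 2) + ε`. -/
theorem finite_optimization_upper_bound :
    ∀ ε : ℝ, 0 < ε → ∃ K : ℕ, ∀ k : ℕ, K ≤ k → ∀ β : ℕ → ℝ,
      (∀ t : ℕ, 0 ≤ β t) → (∑ t ∈ Finset.range k, β t) ≤ 1 →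
      ∃ j : ℕ, k ≤ j ∧ j ≤ 2 * k - 1 ∧
        (∑ t ∈ Finset.range (j - k + 1), β t * (((k + t : ℕ) : ℝ) / (j : ℝ))) ≤
          1 / (1 + Real.log 2) + ε := by
  intro ε hε
  have hlog2 : (0:ℝ) < Real.log 2 := Real.log_pos (by norm_num)
  set c : ℝ := 1 / (1 + Real.log 2) with hc_def
  have hc : 0 < c := div_pos one_pos (by linarith)
  -- the limiting bound function
  set f : ℕ → ℝ := fun k => (1 + 1/((k:ℝ)-1)) / (1 + Real.log ((2*(k:ℝ)-1)/(k:ℝ)))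
    with hf_def
  have hften : Filter.Tendsto f Filter.atTop (nhds c) := by
    have hnum : Filter.Tendsto (fun k : ℕ => 1 + 1/((k:ℝ)-1)) Filter.atTop (nhds 1) := by
      have h1 : Filter.Tendsto (fun k : ℕ => (k:ℝ)-1) Filter.atTop Filter.atTop := by
        have := tendsto_natCast_atTop_atTop (R := ℝ)
        exact Filter.tendsto_atTop_add_const_right _ (-1) this
      have h2 : Filter.Tendsto (fun k : ℕ => 1/((k:ℝ)-1)) Filter.atTop (nhds 0) := by
        simpa [one_div, Function.comp_def] using (tendsto_inv_atTop_zero.comp h1)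
      simpa using tendsto_const_nhds.add h2
    have hden : Filter.Tendsto (fun k : ℕ => 1 + Real.log ((2*(k:ℝ)-1)/(k:ℝ)))
        Filter.atTop (nhds (1 + Real.log 2)) := by
      have h2 : Filter.Tendsto (fun k : ℕ => (2*(k:ℝ)-1)/(k:ℝ)) Filter.atTop (nhds 2) := by
        have heq : ∀ᶠ k : ℕ in Filter.atTop, (2*(k:ℝ)-1)/(k:ℝ) = 2 - 1/(k:ℝ) := by
          filter_upwards [Filter.eventually_gt_atTop 0] with k hk
          have hk0 : (k:ℝ) ≠ 0 := by positivity
          field_simp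
        rw [Filter.tendsto_congr' heq]
        have := tendsto_one_div_atTop_nhds_zero_nat (𝕜 := ℝ)
        simpa using tendsto_const_nhds.sub this
      have hlogcont := (Real.continuousAt_log (by norm_num : (2:ℝ) ≠ 0)).tendsto.comp h2
      simpa using tendsto_const_nhds.add hlogcont
    have h := hnum.div hden (by linarith : (1:ℝ) + Real.log 2 ≠ 0)
    rw [hf_def, hc_def]
    exact h
  obtain ⟨K, hK⟩ := Filter.eventually_atTop.mp
    ((hften.eventually_lt_const (by linarith : c < c + ε)).and (Filter.eventually_ge_atTop 2))
  refine ⟨K, fun k hk β hβ hsum => ?_⟩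
  obtain ⟨hfk, hk2⟩ := hK k hk
  have hk2' : (2:ℝ) ≤ (k:ℝ) := by exact_mod_cast hk2
  have hk1 : 1 ≤ k := by omega
  -- values and weights
  set S : ℕ → ℝ := fun i => ∑ t ∈ Finset.range (i+1),
    β t * (((k + t : ℕ) : ℝ) / ((k + i : ℕ) : ℝ)) with hS_def
  set w : ℕ → ℝ := fun i => c / ((k + i : ℕ) : ℝ) with hw_def
  have hwpos : ∀ i, 0 < w i := by
    intro i
    have h0 : (0:ℝ) < ((k + i : ℕ) : ℝ) := by exact_mod_cast (by omega : 0 < k + i)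
    exact div_pos hc h0
  set W : ℝ := (∑ i ∈ Finset.range (k-1), w i) + c with hW_def
  set T : ℝ := (∑ i ∈ Finset.range (k-1), w i * S i) + c * S (k-1) with hT_def
  have hWpos : 0 < W := by
    have : 0 ≤ ∑ i ∈ Finset.range (k-1), w i :=
      Finset.sum_nonneg fun i _ => (hwpos i).le
    rw [hW_def]; linarith
  -- the minimizing index
  obtain ⟨i₀, hi₀mem, hi₀min⟩ := Finset.exists_min_image (Finset.range k) S
    ⟨0, Finset.mem_range.mpr (by omega)⟩
  have hi₀ : i₀ < k := Finset.mem_range.mp hi₀mem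
  -- T ≥ W * S i₀
  have hTW : W * S i₀ ≤ T := by
    have h1 : ∀ i ∈ Finset.range (k-1), w i * S i₀ ≤ w i * S i := by
      intro i hi
      have : i ∈ Finset.range k := Finset.mem_range.mpr (by
        have := Finset.mem_range.mp hi; omega)
      exact mul_le_mul_of_nonneg_left (hi₀min i this) (hwpos i).le
    have h2 : S i₀ ≤ S (k-1) := hi₀min _ (Finset.mem_range.mpr (by omega))
    have h3 : (∑ i ∈ Finset.range (k-1), w i * S i₀) ≤
        ∑ i ∈ Finset.range (k-1), w i * S i := Finset.sum_le_sum h1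
    have h4 : (∑ i ∈ Finset.range (k-1), w i * S i₀) =
        (∑ i ∈ Finset.range (k-1), w i) * S i₀ := by rw [Finset.sum_mul]
    have h5 : c * S i₀ ≤ c * S (k-1) := mul_le_mul_of_nonneg_left h2 hc.le
    rw [hW_def, hT_def]; nlinarith [h3, h4, h5]
  have hSdiv : S i₀ ≤ T / W := (le_div_iff₀ hWpos).mpr (by linarith [hTW, mul_comm (S i₀) W])
  -- Claim A : T ≤ c * (1 + 1/(k-1))
  have claimA : T ≤ c * (1 + 1/((k:ℝ)-1)) := by
    have hkpos : (0:ℝ) < (k:ℝ) := by linarith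
    have hcast : ((k-1:ℕ):ℝ) = (k:ℝ) - 1 := by
      rw [Nat.cast_sub hk1]; norm_num
    have hm : ((k+(k-1):ℕ):ℝ) = 2*(k:ℝ)-1 := by
      push_cast [hcast]; ring
    -- swap the double sum
    have hswap : (∑ i ∈ Finset.range (k-1), w i * S i)
        = ∑ t ∈ Finset.range (k-1), ∑ i ∈ Finset.Ico t (k-1),
            w i * (β t * (((k + t : ℕ) : ℝ) / ((k + i : ℕ) : ℝ))) := by
      simp only [hS_def, Finset.mul_sum]
      rw [Finset.sum_comm']
      intro x y
      constructor <;> intro h <;> simp at h ⊢ <;> omega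
    have hext : (∑ t ∈ Finset.range (k-1), ∑ i ∈ Finset.Ico t (k-1),
            w i * (β t * (((k + t : ℕ) : ℝ) / ((k + i : ℕ) : ℝ))))
        = ∑ t ∈ Finset.range k, ∑ i ∈ Finset.Ico t (k-1),
            w i * (β t * (((k + t : ℕ) : ℝ) / ((k + i : ℕ) : ℝ))) := by
      apply Finset.sum_subset (Finset.range_subset_range.mpr (by omega))
      intro x _ hx
      have : k - 1 ≤ x := by
        by_contra h
        exact hx (Finset.mem_range.mpr (by omega))
      rw [Finset.Ico_eq_empty (by omega : ¬ x < k-1), Finset.sum_empty]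
    have hsecond : c * S (k-1)
        = ∑ t ∈ Finset.range k, c * (β t * (((k + t : ℕ) : ℝ) / ((k + (k-1) : ℕ) : ℝ))) := by
      simp only [hS_def]
      rw [Nat.sub_add_cancel hk1, Finset.mul_sum]
    have hTexp : T = ∑ t ∈ Finset.range k,
        ((∑ i ∈ Finset.Ico t (k-1), w i * (β t * (((k + t : ℕ) : ℝ) / ((k + i : ℕ) : ℝ))))
          + c * (β t * (((k + t : ℕ) : ℝ) / ((k + (k-1) : ℕ) : ℝ)))) := by
      rw [hT_def, hswap, hext, hsecond, ← Finset.sum_add_distrib]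
    -- per-index key bound
    have key : ∀ t ∈ Finset.range k,
        ((∑ i ∈ Finset.Ico t (k-1), w i * (β t * (((k + t : ℕ) : ℝ) / ((k + i : ℕ) : ℝ))))
          + c * (β t * (((k + t : ℕ) : ℝ) / ((k + (k-1) : ℕ) : ℝ))))
        ≤ β t * (c * (1 + 1/((k:ℝ)-1))) := by
      intro t ht
      have htk : t < k := Finset.mem_range.mp ht
      have htk1 : t ≤ k - 1 := by omega
      have ht0 : (0:ℝ) ≤ (t:ℝ) := Nat.cast_nonneg t
      have hxt : (0:ℝ) < (k:ℝ) + t - 1 := by linarith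
      -- rewrite inner sum
      have hinner : (∑ i ∈ Finset.Ico t (k-1),
            w i * (β t * (((k + t : ℕ) : ℝ) / ((k + i : ℕ) : ℝ))))
          = (β t * (c * ((k:ℝ)+t))) * ∑ i ∈ Finset.Ico t (k-1), (1/((k:ℝ)+i))^2 := by
        rw [Finset.mul_sum]
        apply Finset.sum_congr rfl
        intro i _
        have hki : (0:ℝ) < (k:ℝ)+i := by positivity
        rw [hw_def]
        push_cast
        field_simp
      -- telescoping bound for the squares
      have hE : (∑ i ∈ Finset.Ico t (k-1), (1/((k:ℝ)+i))^2)
          ≤ 1/((k:ℝ)+t-1) - 1/(2*(k:ℝ)-2) := by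
        have htele := tele_Ico (fun i => 1/((k:ℝ)+i-1)) htk1
        have hterm : ∀ i ∈ Finset.Ico t (k-1), (1/((k:ℝ)+i))^2
            ≤ (fun i : ℕ => 1/((k:ℝ)+i-1)) i - (fun i : ℕ => 1/((k:ℝ)+i-1)) (i+1) := by
          intro i _
          simp only
          push_cast
          have h1 : (0:ℝ) < (k:ℝ)+i-1 := by
            have : (0:ℝ) ≤ (i:ℝ) := Nat.cast_nonneg i
            linarith
          have h2 : (0:ℝ) < (k:ℝ)+i := by linarith
          have heq : 1/((k:ℝ)+i-1) - 1/((k:ℝ)+(i+1)-1) = 1/(((k:ℝ)+i-1)*((k:ℝ)+i)) := by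
            rw [show (k:ℝ)+((i:ℝ)+1)-1 = (k:ℝ)+i from by ring]
            field_simp
            ring
          rw [heq, show (1/((k:ℝ)+i))^2 = 1/(((k:ℝ)+i)^2) from by
            rw [div_pow]; norm_num]
          rw [div_le_div_iff₀ (by positivity) (by positivity)]
          nlinarith
        calc (∑ i ∈ Finset.Ico t (k-1), (1/((k:ℝ)+i))^2)
            ≤ ∑ i ∈ Finset.Ico t (k-1),
              ((fun i : ℕ => 1/((k:ℝ)+i-1)) i - (fun i : ℕ => 1/((k:ℝ)+i-1)) (i+1)) :=
              Finset.sum_le_sum hterm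
          _ = 1/((k:ℝ)+t-1) - 1/((k:ℝ)+((k-1:ℕ):ℝ)-1) := htele
          _ = 1/((k:ℝ)+t-1) - 1/(2*(k:ℝ)-2) := by rw [hcast]; ring_nf
      have hP : (0:ℝ) ≤ β t * (c * ((k:ℝ)+t)) :=
        mul_nonneg (hβ t) (by positivity)
      have hz : 1/(2*(k:ℝ)-1) ≤ 1/(2*(k:ℝ)-2) :=
        one_div_le_one_div_of_le (by linarith) (by linarith)
      have h1 : (∑ i ∈ Finset.Ico t (k-1), (1/((k:ℝ)+i))^2) + 1/(2*(k:ℝ)-1)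
          ≤ 1/((k:ℝ)+t-1) := by linarith
      have h2 : ((k:ℝ)+t) * (1/((k:ℝ)+t-1)) ≤ 1 + 1/((k:ℝ)-1) := by
        have ha : ((k:ℝ)+t) * (1/((k:ℝ)+t-1)) = 1 + 1/((k:ℝ)+t-1) := by
          field_simp
          ring
        have hb : 1/((k:ℝ)+t-1) ≤ 1/((k:ℝ)-1) :=
          one_div_le_one_div_of_le (by linarith) (by linarith)
        rw [ha]; linarith
      calc ((∑ i ∈ Finset.Ico t (k-1), w i * (β t * (((k + t : ℕ) : ℝ) / ((k + i : ℕ) : ℝ))))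
            + c * (β t * (((k + t : ℕ) : ℝ) / ((k + (k-1) : ℕ) : ℝ))))
          = (β t * (c * ((k:ℝ)+t))) * ((∑ i ∈ Finset.Ico t (k-1), (1/((k:ℝ)+i))^2)
              + 1/(2*(k:ℝ)-1)) := by
            rw [hinner, hm]
            push_cast
            ring
        _ ≤ (β t * (c * ((k:ℝ)+t))) * (1/((k:ℝ)+t-1)) :=
            mul_le_mul_of_nonneg_left h1 hP
        _ = β t * (c * (((k:ℝ)+t) * (1/((k:ℝ)+t-1)))) := by ring
        _ ≤ β t * (c * (1 + 1/((k:ℝ)-1))) := by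
            apply mul_le_mul_of_nonneg_left _ (hβ t)
            exact mul_le_mul_of_nonneg_left h2 hc.le
    have hcoef : (0:ℝ) ≤ c * (1 + 1/((k:ℝ)-1)) := by
      have : (0:ℝ) < (k:ℝ) - 1 := by linarith
      positivity
    calc T = _ := hTexp
      _ ≤ ∑ t ∈ Finset.range k, β t * (c * (1 + 1/((k:ℝ)-1))) := Finset.sum_le_sum key
      _ = (∑ t ∈ Finset.range k, β t) * (c * (1 + 1/((k:ℝ)-1))) := by
          rw [Finset.sum_mul]
      _ ≤ 1 * (c * (1 + 1/((k:ℝ)-1))) := mul_le_mul_of_nonneg_right hsum hcoef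
      _ = c * (1 + 1/((k:ℝ)-1)) := by ring
  -- Claim B : W ≥ c * (1 + log((2k-1)/k))
  have claimB : c * (1 + Real.log ((2*(k:ℝ)-1)/(k:ℝ))) ≤ W := by
    have hkpos : (0:ℝ) < (k:ℝ) := by linarith
    have h2k1 : (0:ℝ) < 2*(k:ℝ)-1 := by linarith
    have hcast : ((k-1:ℕ):ℝ) = (k:ℝ) - 1 := by
      rw [Nat.cast_sub hk1]; norm_num
    set L : ℕ → ℝ := fun i => Real.log ((k:ℝ)+i) with hL_def
    have htele : ∑ i ∈ Finset.range (k-1), (L (i+1) - L i) = L (k-1) - L 0 :=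
      Finset.sum_range_sub L (k-1)
    have hLk : L (k-1) = Real.log (2*(k:ℝ)-1) := by
      simp only [hL_def]
      rw [show (k:ℝ) + ((k-1:ℕ):ℝ) = 2*(k:ℝ)-1 from by rw [hcast]; ring]
    have hL0 : L 0 = Real.log (k:ℝ) := by simp [hL_def]
    have hterm : ∀ i ∈ Finset.range (k-1), L (i+1) - L i ≤ 1/((k:ℝ)+i) := by
      intro i _
      have hx : (0:ℝ) < (k:ℝ)+i := by positivity
      have hx1 : (0:ℝ) < (k:ℝ)+i+1 := by positivity
      have hlog := Real.log_le_sub_one_of_pos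
        (show (0:ℝ) < ((k:ℝ)+i+1)/((k:ℝ)+i) by positivity)
      rw [Real.log_div hx1.ne' hx.ne'] at hlog
      have heq : ((k:ℝ)+i+1)/((k:ℝ)+i) - 1 = 1/((k:ℝ)+i) := by field_simp; ring
      rw [heq] at hlog
      simp only [hL_def]
      push_cast
      rw [show (k:ℝ) + ((i:ℝ)+1) = (k:ℝ)+(i:ℝ)+1 from by ring]
      linarith
    have hsum' : L (k-1) - L 0 ≤ ∑ i ∈ Finset.range (k-1), 1/((k:ℝ)+i) := by
      rw [← htele]; exact Finset.sum_le_sum hterm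
    have hWval : W = c * (∑ i ∈ Finset.range (k-1), 1/((k:ℝ)+i)) + c := by
      rw [hW_def, Finset.mul_sum]
      congr 1
      apply Finset.sum_congr rfl
      intro i _
      rw [hw_def]
      push_cast
      ring
    rw [Real.log_div h2k1.ne' hkpos.ne', hWval]
    have hmul := mul_le_mul_of_nonneg_left hsum' hc.le
    rw [hLk, hL0] at hmul
    rw [mul_add, mul_one]
    linarith [hmul]
  have hBpos : 0 < c * (1 + Real.log ((2*(k:ℝ)-1)/(k:ℝ))) := by
    have harg : (1:ℝ) ≤ (2*(k:ℝ)-1)/(k:ℝ) := by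
      rw [le_div_iff₀ (by linarith : (0:ℝ) < (k:ℝ))]; linarith
    have := Real.log_nonneg harg
    have : (0:ℝ) < 1 + Real.log ((2*(k:ℝ)-1)/(k:ℝ)) := by linarith
    exact mul_pos hc this
  have hApos : 0 ≤ c * (1 + 1/((k:ℝ)-1)) := by
    have : (0:ℝ) < (k:ℝ) - 1 := by linarith
    positivity
  have hfinal : S i₀ ≤ f k := by
    have hdiv : T / W ≤ (c * (1 + 1/((k:ℝ)-1))) / (c * (1 + Real.log ((2*(k:ℝ)-1)/(k:ℝ)))) :=
      div_le_div₀ hApos claimA hBpos claimB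
    have heq : (c * (1 + 1/((k:ℝ)-1))) / (c * (1 + Real.log ((2*(k:ℝ)-1)/(k:ℝ)))) = f k := by
      rw [hf_def]; rw [mul_div_mul_left _ _ hc.ne']
    calc S i₀ ≤ T / W := hSdiv
      _ ≤ _ := hdiv
      _ = f k := heq
  refine ⟨k + i₀, by omega, by omega, ?_⟩
  have hrange : k + i₀ - k + 1 = i₀ + 1 := by omega
  rw [hrange]
  calc (∑ t ∈ Finset.range (i₀+1), β t * (((k + t : ℕ) : ℝ) / ((k + i₀ : ℕ) : ℝ)))
      = S i₀ := by rw [hS_def]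
    _ ≤ f k := hfinal
    _ ≤ c + ε := hfk.le
end

section
/- Asymptotic value of the optimization problem: for each k ≥ 1 define V_k = sup over all nonnegative reals β_0, …, β_{k-1} with Σ_{t=0}^{k-1} β_t ≤ 1 of min_{k ≤ j ≤ 2k-1} Σ_{t=0}^{j-k} β_t·(k+t)/j. Then the sequence (V_k) converges and lim_{k→∞} V_k = 1/(1 + ln 2). -/
open Finset Real Filter Topology

noncomputable def optD (k : ℕ) : ℝ := ∑ t ∈ Finset.range (k - 1), 1 / ((k : ℝ) + t + 1)

noncomputable def optC (k : ℕ) : ℝ := 1 / (1 + optD k)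

lemma optD_nonneg (k : ℕ) : 0 ≤ optD k := by
  apply Finset.sum_nonneg; intro t _; positivity

lemma one_add_optD_pos (k : ℕ) : (0:ℝ) < 1 + optD k := by
  have := optD_nonneg k; linarith

lemma optC_pos (k : ℕ) : 0 < optC k := by
  have := one_add_optD_pos k; rw [optC]; positivity

lemma optD_eq_Icc (k : ℕ) (hk : 1 ≤ k) :
    optD k = ∑ j ∈ Finset.Icc (k+1) (2*k-1), 1 / (j : ℝ) := by
  have h2 : 2*k-1+1 = 2*k := by omega
  rw [← Finset.Ico_add_one_right_eq_Icc, h2, Finset.sum_Ico_eq_sum_range]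
  have h3 : 2*k - (k+1) = k - 1 := by omega
  rw [h3, optD]
  refine Finset.sum_congr rfl fun i _ => ?_
  push_cast; ring_nf

noncomputable def optβ (k : ℕ) : ℕ → ℝ :=
  fun t => if t = 0 then optC k else optC k / ((k : ℝ) + t)

lemma optβ_nonneg (k t : ℕ) : 0 ≤ optβ k t := by
  rw [optβ]
  split
  · exact (optC_pos k).le
  · have := (optC_pos k).le
    positivity

lemma optβ_sum (k : ℕ) (hk : 1 ≤ k) : ∑ t ∈ Finset.range k, optβ k t = 1 := by
  obtain ⟨m, rfl⟩ : ∃ m, k = m + 1 := ⟨k - 1, by omega⟩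
  rw [Finset.sum_range_succ']
  have h1 : ∀ t ∈ Finset.range m, optβ (m+1) (t+1) = optC (m+1) * (1 / ((m:ℝ)+1+t+1)) := by
    intro t _
    rw [optβ, if_neg (Nat.succ_ne_zero t)]
    push_cast
    ring
  rw [Finset.sum_congr rfl h1, ← Finset.mul_sum]
  have h2 : ∑ t ∈ Finset.range m, (1 / ((m:ℝ)+1+t+1)) = optD (m+1) := by
    rw [optD]
    refine Finset.sum_congr (by norm_num) fun t _ => ?_
    push_cast; ring_nf
  rw [h2, optβ, if_pos rfl, optC]
  have := one_add_optD_pos (m+1)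
  field_simp
  ring

lemma optβ_inner (k n : ℕ) (hk : 1 ≤ k) :
    ∑ t ∈ Finset.range (n + 1), optβ k t * (((k + t : ℕ) : ℝ) / ((k + n : ℕ) : ℝ))
      = optC k := by
  have hkpos : (0:ℝ) < (k:ℝ) := by exact_mod_cast hk
  have hj : (0:ℝ) < ((k:ℝ) + n) := by positivity
  rw [Finset.sum_range_succ']
  have h1 : ∀ t ∈ Finset.range n,
      optβ k (t+1) * (((k + (t+1) : ℕ) : ℝ) / ((k + n : ℕ) : ℝ))
        = optC k * (1 / ((k:ℝ) + n)) := by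
    intro t _
    rw [optβ, if_neg (Nat.succ_ne_zero t)]
    have h : (0:ℝ) < (k:ℝ) + t + 1 := by positivity
    push_cast
    field_simp
  rw [Finset.sum_congr rfl h1, Finset.sum_const, Finset.card_range, optβ, if_pos rfl]
  push_cast
  rw [nsmul_eq_mul]
  field_simp
  ring

lemma optC_mem (k : ℕ) (hk : 1 ≤ k) :
    optC k ∈ {v : ℝ | ∃ β : ℕ → ℝ, (∀ t : ℕ, 0 ≤ β t) ∧
      (∑ t ∈ Finset.range k, β t) ≤ 1 ∧
      v = sInf {w : ℝ | ∃ j : ℕ, k ≤ j ∧ j ≤ 2 * k - 1 ∧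
        w = ∑ t ∈ Finset.range (j - k + 1), β t * (((k + t : ℕ) : ℝ) / (j : ℝ))}} := by
  refine ⟨optβ k, optβ_nonneg k, le_of_eq (optβ_sum k hk), ?_⟩
  have hset : {w : ℝ | ∃ j : ℕ, k ≤ j ∧ j ≤ 2 * k - 1 ∧
      w = ∑ t ∈ Finset.range (j - k + 1), optβ k t * (((k + t : ℕ) : ℝ) / (j : ℝ))}
      = {optC k} := by
    ext x
    simp only [Set.mem_setOf_eq, Set.mem_singleton_iff]
    constructor
    · rintro ⟨j, hj1, hj2, rfl⟩
      obtain ⟨n, rfl⟩ : ∃ n, j = k + n := ⟨j - k, by omega⟩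
      have hn : k + n - k = n := by omega
      rw [hn]
      exact optβ_inner k n hk
    · rintro rfl
      refine ⟨k, le_rfl, by omega, ?_⟩
      have h := optβ_inner k 0 hk
      rw [Nat.sub_self]
      rw [show ((k:ℕ):ℝ) = ((k + 0 : ℕ):ℝ) by norm_num]
      exact h.symm
  rw [hset, csInf_singleton]

lemma opt_upper (k : ℕ) (hk : 1 ≤ k) (v : ℝ)
    (hv : v ∈ {v : ℝ | ∃ β : ℕ → ℝ, (∀ t : ℕ, 0 ≤ β t) ∧
      (∑ t ∈ Finset.range k, β t) ≤ 1 ∧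
      v = sInf {w : ℝ | ∃ j : ℕ, k ≤ j ∧ j ≤ 2 * k - 1 ∧
        w = ∑ t ∈ Finset.range (j - k + 1), β t * (((k + t : ℕ) : ℝ) / (j : ℝ))}}) :
    v ≤ optC k := by
  obtain ⟨β, hβ0, hβsum, rfl⟩ := hv
  set w : ℕ → ℝ :=
    fun j => ∑ t ∈ Finset.range (j - k + 1), β t * (((k + t : ℕ) : ℝ) / (j : ℝ)) with hwdef
  set W := {x : ℝ | ∃ j : ℕ, k ≤ j ∧ j ≤ 2 * k - 1 ∧
      x = ∑ t ∈ Finset.range (j - k + 1), β t * (((k + t : ℕ) : ℝ) / (j : ℝ))} with hW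
  have hterm : ∀ j t : ℕ, 0 ≤ β t * (((k + t : ℕ) : ℝ) / (j : ℝ)) := fun j t =>
    mul_nonneg (hβ0 t) (div_nonneg (Nat.cast_nonneg _) (Nat.cast_nonneg _))
  have hWne : W.Nonempty := ⟨w k, k, le_rfl, by omega, rfl⟩
  have hWbdd : BddBelow W := by
    refine ⟨0, ?_⟩
    rintro x ⟨j, _, _, rfl⟩
    exact Finset.sum_nonneg fun t _ => hterm j t
  have hv0 : 0 ≤ sInf W := by
    refine le_csInf hWne ?_
    rintro x ⟨j, _, _, rfl⟩
    exact Finset.sum_nonneg fun t _ => hterm j t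
  have hvle : ∀ j, k ≤ j → j ≤ 2*k-1 → sInf W ≤ w j := fun j h1 h2 =>
    csInf_le hWbdd ⟨j, h1, h2, rfl⟩
  set u : ℕ → ℝ := fun j => ∑ t ∈ Finset.range (j - k + 1), β t * ((k + t : ℕ) : ℝ) with hudef
  have hwu : ∀ j : ℕ, w j = u j / (j : ℝ) := by
    intro j
    rw [hwdef, hudef]
    simp only
    rw [Finset.sum_div]
    exact Finset.sum_congr rfl fun t _ => (mul_div_assoc _ _ _).symm
  have key : ∀ m, k ≤ m →
      ∑ t ∈ Finset.range (m - k + 1), β t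
        = w m + ∑ j ∈ Finset.Icc (k+1) m, w (j-1) / (j : ℝ) := by
    intro m hm
    induction m, hm using Nat.le_induction with
    | base =>
        have hk0 : (k:ℝ) ≠ 0 := Nat.cast_ne_zero.mpr (by omega)
        rw [Finset.Icc_eq_empty (by omega), Finset.sum_empty, add_zero, hwdef]
        simp only [Nat.sub_self, zero_add, Finset.sum_range_one, Nat.add_zero,
          div_self hk0, mul_one]
    | succ m hm ih =>
        have hm0 : (m:ℝ) ≠ 0 := Nat.cast_ne_zero.mpr (by omega)
        have hm1 : ((m:ℝ) + 1) ≠ 0 := by positivity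
        have hrange : m + 1 - k + 1 = (m - k + 1) + 1 := by omega
        have hu : u (m+1) = u m + β (m - k + 1) * ((m:ℝ) + 1) := by
          rw [hudef]
          simp only
          rw [hrange, Finset.sum_range_succ]
          congr 1
          rw [show k + (m - k + 1) = m + 1 by omega]
          push_cast
          ring
        have hβeq : β (m - k + 1) = w (m+1) - w m + w m / ((m:ℝ)+1) := by
          have h1 : w (m+1) = u (m+1) / ((m:ℝ)+1) := by rw [hwu (m+1)]; push_cast; ring_nf
          have h2 : w m = u m / (m:ℝ) := hwu m
          rw [h1, h2, hu]
          field_simp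
          ring
        rw [hrange, Finset.sum_range_succ, ih,
          Finset.sum_Icc_succ_top (by omega : k+1 ≤ m+1), hβeq]
        simp only [Nat.add_sub_cancel]
        push_cast
        ring
  -- conclude
  have h2k : k ≤ 2*k-1 := by omega
  have hfin := key (2*k-1) h2k
  rw [show 2*k-1-k+1 = k by omega] at hfin
  have hge : w (2*k-1) + ∑ j ∈ Finset.Icc (k+1) (2*k-1), w (j-1) / (j : ℝ)
      ≥ sInf W + ∑ j ∈ Finset.Icc (k+1) (2*k-1), sInf W / (j : ℝ) := by
    apply add_le_add
    · exact hvle _ h2k le_rfl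
    · apply Finset.sum_le_sum
      intro j hj
      rw [Finset.mem_Icc] at hj
      have hjpos : (0:ℝ) < (j:ℝ) := by exact_mod_cast (by omega : 0 < j)
      have hwj : sInf W ≤ w (j-1) := hvle (j-1) (by omega) (by omega)
      gcongr
  have hsum1 : ∑ j ∈ Finset.Icc (k+1) (2*k-1), sInf W / (j:ℝ) = sInf W * optD k := by
    rw [optD_eq_Icc k hk, Finset.mul_sum]
    exact Finset.sum_congr rfl fun j _ => by rw [mul_one_div]
  have hexp : sInf W * (1 + optD k) = sInf W + sInf W * optD k := by ring
  rw [optC, le_div_iff₀ (one_add_optD_pos k)]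
  rw [hsum1] at hge
  linarith [hβsum, hfin.symm.trans_le hβsum]

lemma optD_tendsto : Tendsto optD atTop (𝓝 (Real.log 2)) := by
  have hcast : ∀ n : ℕ, ((harmonic n : ℚ) : ℝ) = ∑ i ∈ Finset.range n, ((i:ℝ)+1)⁻¹ := by
    intro n; rw [harmonic]; push_cast; rfl
  have hD : ∀ k : ℕ, 1 ≤ k →
      optD k = ((harmonic (2*k-1) : ℚ) : ℝ) - ((harmonic k : ℚ) : ℝ) := by
    intro k hk
    rw [hcast, hcast, ← Finset.sum_Ico_eq_sub _ (by omega : k ≤ 2*k-1),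
      Finset.sum_Ico_eq_sum_range, show 2*k-1-k = k-1 by omega, optD]
    refine Finset.sum_congr rfl fun i _ => ?_
    push_cast
    rw [one_div]
  have h2k : Tendsto (fun k : ℕ => 2*k-1) atTop atTop := by
    apply tendsto_atTop_mono (f := id) (fun k => ?_) tendsto_id
    simp only [id_eq]
    omega
  have t1 : Tendsto (fun k : ℕ => ((harmonic (2*k-1) : ℚ) : ℝ) - Real.log ((2*k-1 : ℕ) : ℝ))
      atTop (𝓝 Real.eulerMascheroniConstant) := Real.tendsto_harmonic_sub_log.comp h2k
  have t2 : Tendsto (fun k : ℕ => ((harmonic k : ℚ) : ℝ) - Real.log k)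
      atTop (𝓝 Real.eulerMascheroniConstant) := Real.tendsto_harmonic_sub_log
  have t4 : Tendsto (fun k : ℕ => (2:ℝ) - 1/k) atTop (𝓝 2) := by
    have h0 := tendsto_one_div_atTop_nhds_zero_nat (𝕜 := ℝ)
    simpa using tendsto_const_nhds.sub h0
  have t5 : Tendsto (fun k : ℕ => Real.log (2 - 1/(k:ℝ))) atTop (𝓝 (Real.log 2)) :=
    (Real.continuousAt_log (by norm_num)).tendsto.comp t4
  have t3 : Tendsto (fun k : ℕ => Real.log ((2*k-1 : ℕ) : ℝ) - Real.log k)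
      atTop (𝓝 (Real.log 2)) := by
    apply t5.congr'
    filter_upwards [eventually_ge_atTop 1] with k hk
    have hk0 : (k:ℝ) ≠ 0 := Nat.cast_ne_zero.mpr (by omega)
    have hkpos : (0:ℝ) < (k:ℝ) := by exact_mod_cast (by omega : 0 < k)
    have hc : ((2*k-1 : ℕ) : ℝ) = 2*(k:ℝ) - 1 := by
      have h : ((2*k-1 : ℕ) : ℝ) = ((2*k : ℕ) : ℝ) - ((1:ℕ):ℝ) := Nat.cast_sub (by omega)
      push_cast at h
      linarith
    have hnum : ((2*k-1 : ℕ) : ℝ) ≠ 0 := Nat.cast_ne_zero.mpr (by omega)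
    rw [show (2:ℝ) - 1/(k:ℝ) = ((2*k-1:ℕ):ℝ)/(k:ℝ) by rw [hc]; field_simp,
      Real.log_div hnum hk0]
  have tD : Tendsto (fun k : ℕ =>
      (((harmonic (2*k-1) : ℚ) : ℝ) - Real.log ((2*k-1 : ℕ) : ℝ))
        - (((harmonic k : ℚ) : ℝ) - Real.log k)
        + (Real.log ((2*k-1 : ℕ) : ℝ) - Real.log k))
      atTop (𝓝 (Real.eulerMascheroniConstant - Real.eulerMascheroniConstant + Real.log 2)) :=
    (t1.sub t2).add t3
  rw [sub_self, zero_add] at tD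
  apply tD.congr'
  filter_upwards [eventually_ge_atTop 1] with k hk
  rw [hD k hk]
  ring

lemma optC_tendsto : Tendsto optC atTop (𝓝 (1 / (1 + Real.log 2))) := by
  have hne : (1:ℝ) + Real.log 2 ≠ 0 := by
    have := Real.log_pos (by norm_num : (1:ℝ) < 2); linarith
  exact tendsto_const_nhds.div (tendsto_const_nhds.add optD_tendsto) hne

/-- Asymptotic value of the optimization problem underlying the upper bound: for
`k ≥ 1`, let `V k` be the supremum, over nonnegative `β₀, …, β_{k-1}` with
`Σ_{t<k} β_t ≤ 1`, of the minimum over `k ≤ j ≤ 2k-1` of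
`Σ_{t=0}^{j-k} β_t (k+t)/j`. Then `V k → 1/(1 + ln 2)` as `k → ∞`. -/
theorem optimization_value_tendsto (V : ℕ → ℝ)
    (hV : ∀ k : ℕ, 1 ≤ k →
      V k = sSup {v : ℝ | ∃ β : ℕ → ℝ, (∀ t : ℕ, 0 ≤ β t) ∧
        (∑ t ∈ Finset.range k, β t) ≤ 1 ∧
        v = sInf {w : ℝ | ∃ j : ℕ, k ≤ j ∧ j ≤ 2 * k - 1 ∧
          w = ∑ t ∈ Finset.range (j - k + 1), β t * (((k + t : ℕ) : ℝ) / (j : ℝ))}}) :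
    Filter.Tendsto V Filter.atTop (nhds (1 / (1 + Real.log 2))) := by
  apply optC_tendsto.congr'
  filter_upwards [eventually_ge_atTop 1] with k hk
  rw [hV k hk]
  exact (IsGreatest.csSup_eq ⟨optC_mem k hk, fun v hv => opt_upper k hk v hv⟩).symm
end
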